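/- arXiv:2604.19266 — 3 statements merged into one kernel-verified Lean document; each statement's English description precedes it below -/
import Mathlib

section
/- Let g : D^3 → D be a majority operation (i.e., g(x,y,y) = g(y,x,y) = g(y,y,x) = y for all x,y) and let R ⊆ D^n be a relation preserved by g (applied coordinatewise). Then a tuple r ∈ D^n belongs to R if and only if for every pair of distinct indices i, j ∈ [n], the pair (r_i, r_j) belongs to the projection of R onto coordinates {i, j}. -/
/-- If `g` is a majority operation preserving `R ⊆ Dⁿ` (`n ≥ 2`), then a tuple belongs
to `R` iff each of its binary projections lies in the corresponding projection of `R`. -/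
theorem stmt1 {D : Type} [Fintype D] {n : ℕ} (hn : 2 ≤ n)
    (g : D → D → D → D)
    (hmaj : ∀ x y : D, g x y y = y ∧ g y x y = y ∧ g y y x = y)
    (R : Set (Fin n → D))
    (hg : ∀ a ∈ R, ∀ b ∈ R, ∀ c ∈ R, (fun i => g (a i) (b i) (c i)) ∈ R)
    (r : Fin n → D) :
    r ∈ R ↔ ∀ i j : Fin n, i ≠ j → ∃ t ∈ R, t i = r i ∧ t j = r j := by
  constructor
  · intro hr i j _
    exact ⟨r, hr, rfl, rfl⟩
  · intro h
    have key : ∀ S : Finset (Fin n), 2 ≤ S.card → ∃ t ∈ R, ∀ l ∈ S, t l = r l := by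
      intro S
      induction S using Finset.strongInduction with
      | _ S ih =>
        intro hS
        rcases eq_or_lt_of_le hS with h2 | h3
        · obtain ⟨i, j, hij, rfl⟩ := Finset.card_eq_two.mp h2.symm
          obtain ⟨t, ht, hti, htj⟩ := h i j hij
          refine ⟨t, ht, ?_⟩
          intro l hl
          simp only [Finset.mem_insert, Finset.mem_singleton] at hl
          rcases hl with rfl | rfl <;> assumption
        · -- pick three distinct elements of S
          have hpos : 0 < S.card := by omega
          obtain ⟨i, hi⟩ := Finset.card_pos.mp hpos
          have hc1 : 0 < (S.erase i).card := by
            rw [Finset.card_erase_of_mem hi]; omega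
          obtain ⟨j, hj⟩ := Finset.card_pos.mp hc1
          have hji : j ≠ i := Finset.ne_of_mem_erase hj
          have hjS : j ∈ S := Finset.mem_of_mem_erase hj
          have hc2 : 0 < ((S.erase i).erase j).card := by
            rw [Finset.card_erase_of_mem hj, Finset.card_erase_of_mem hi]; omega
          obtain ⟨k, hk⟩ := Finset.card_pos.mp hc2
          have hkj : k ≠ j := Finset.ne_of_mem_erase hk
          have hki : k ≠ i := Finset.ne_of_mem_erase (Finset.mem_of_mem_erase hk)
          have hkS : k ∈ S := Finset.mem_of_mem_erase (Finset.mem_of_mem_erase hk)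
          have hcard2 : ∀ x ∈ S, 2 ≤ (S.erase x).card := by
            intro x hx
            rw [Finset.card_erase_of_mem hx]; omega
          obtain ⟨a, ha, haeq⟩ :=
            ih (S.erase i) (Finset.erase_ssubset hi) (hcard2 i hi)
          obtain ⟨b, hb, hbeq⟩ :=
            ih (S.erase j) (Finset.erase_ssubset hjS) (hcard2 j hjS)
          obtain ⟨c, hc, hceq⟩ :=
            ih (S.erase k) (Finset.erase_ssubset hkS) (hcard2 k hkS)
          refine ⟨_, hg a ha b hb c hc, ?_⟩
          intro l hl
          show g (a l) (b l) (c l) = r l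
          by_cases hli : l = i
          · subst hli
            rw [hbeq l (Finset.mem_erase.mpr ⟨Ne.symm hji, hi⟩),
              hceq l (Finset.mem_erase.mpr ⟨Ne.symm hki, hi⟩)]
            exact (hmaj (a l) (r l)).1
          · by_cases hlj : l = j
            · subst hlj
              rw [haeq l (Finset.mem_erase.mpr ⟨hji, hjS⟩),
                hceq l (Finset.mem_erase.mpr ⟨Ne.symm hkj, hjS⟩)]
              exact (hmaj (b l) (r l)).2.1
            · by_cases hlk : l = k
              · subst hlk
                rw [haeq l (Finset.mem_erase.mpr ⟨hki, hkS⟩),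
                  hbeq l (Finset.mem_erase.mpr ⟨hkj, hkS⟩)]
                exact (hmaj (c l) (r l)).2.2
              · rw [haeq l (Finset.mem_erase.mpr ⟨hli, hl⟩),
                  hbeq l (Finset.mem_erase.mpr ⟨hlj, hl⟩),
                  hceq l (Finset.mem_erase.mpr ⟨hlk, hl⟩)]
                exact (hmaj (r l) (r l)).1
    obtain ⟨t, ht, hteq⟩ := key Finset.univ (by simpa using hn)
    have : t = r := funext fun l => hteq l (Finset.mem_univ l)
    exact this ▸ ht
end

section
/- The language L = (001 + 010 + 110)* over {0,1} (all concatenations of 3-bit blocks from {001, 010, 110}) is closed under the coordinatewise majority operation Maj, where Maj(x,y,z) = (x∧y)∨(x∧z)∨(y∧z); moreover, L is not closed under the minority operation x⊕y⊕z, nor under coordinatewise ∧, nor under coordinatewise ∨. -/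
/-- The language `(001 + 010 + 110)*`. -/
def L6 : Set (List Bool) :=
  {w | ∃ bs : List (List Bool),
    (∀ b ∈ bs, b ∈ ({[false, false, true], [false, true, false],
      [true, true, false]} : Set (List Bool))) ∧ w = bs.flatten}

/-- Coordinatewise application of a ternary Boolean operation to equal-length strings. -/
def pw3 (f : Bool → Bool → Bool → Bool) (x y z : List Bool) : List Bool :=
  List.zipWith (fun a p => f a p.1 p.2) x (y.zip z)

/-- Coordinatewise application of a binary Boolean operation. -/
def pw2 (f : Bool → Bool → Bool) (x y : List Bool) : List Bool :=
  List.zipWith f x y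

def S6 : Set (List Bool) :=
  ({[false, false, true], [false, true, false], [true, true, false]} : Set (List Bool))

lemma pw3_append (f : Bool → Bool → Bool → Bool) (x1 x2 y1 y2 z1 z2 : List Bool)
    (h1 : x1.length = y1.length) (h2 : y1.length = z1.length) :
    pw3 f (x1 ++ x2) (y1 ++ y2) (z1 ++ z2) = pw3 f x1 y1 z1 ++ pw3 f x2 y2 z2 := by
  unfold pw3
  rw [List.zip_append h2, List.zipWith_append]
  rw [List.length_zip, h1, h2, min_self]

lemma flatten_len (bs : List (List Bool)) (h : ∀ b ∈ bs, b ∈ S6) :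
    bs.flatten.length = 3 * bs.length := by
  induction bs with
  | nil => simp
  | cons b bs ih =>
    have hb : b ∈ S6 := h b (by simp)
    have hlen : b.length = 3 := by
      rcases hb with h | h | h <;> subst h <;> rfl
    simp [List.flatten_cons, hlen, ih (fun c hc => h c (by simp [hc]))]
    ring

lemma maj_block (a b c : List Bool) (ha : a ∈ S6) (hb : b ∈ S6) (hc : c ∈ S6) :
    pw3 (fun a b c => (a && b) || (a && c) || (b && c)) a b c ∈ S6 := by
  rcases ha with h | h | h <;> rcases hb with h' | h' | h' <;> rcases hc with h'' | h'' | h'' <;>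
    subst h <;> subst h' <;> subst h'' <;> simp [pw3, S6]

lemma maj_closed (bx by' bz : List (List Bool))
    (hx : ∀ b ∈ bx, b ∈ S6) (hy : ∀ b ∈ by', b ∈ S6) (hz : ∀ b ∈ bz, b ∈ S6)
    (h1 : bx.length = by'.length) (h2 : by'.length = bz.length) :
    pw3 (fun a b c => (a && b) || (a && c) || (b && c)) bx.flatten by'.flatten bz.flatten ∈ L6 := by
  induction bx generalizing by' bz with
  | nil =>
    have : by' = [] := List.length_eq_zero_iff.mp h1.symm
    subst this
    have : bz = [] := List.length_eq_zero_iff.mp h2.symm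
    subst this
    exact ⟨[], by simp, rfl⟩
  | cons a bx ih =>
    cases by' with
    | nil => simp at h1
    | cons b by' =>
      cases bz with
      | nil => simp at h2
      | cons c bz =>
        have ha : a ∈ S6 := hx a (by simp)
        have hb : b ∈ S6 := hy b (by simp)
        have hc : c ∈ S6 := hz c (by simp)
        have la : a.length = 3 := by rcases ha with h | h | h <;> subst h <;> rfl
        have lb : b.length = 3 := by rcases hb with h | h | h <;> subst h <;> rfl
        have lc : c.length = 3 := by rcases hc with h | h | h <;> subst h <;> rfl
        simp only [List.flatten_cons]
        rw [pw3_append _ _ _ _ _ _ _ (by rw [la, lb]) (by rw [lb, lc])]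
        obtain ⟨bs, hbs, hflat⟩ := ih by' bz (fun d hd => hx d (by simp [hd]))
          (fun d hd => hy d (by simp [hd])) (fun d hd => hz d (by simp [hd]))
          (by simpa using h1) (by simpa using h2)
        exact ⟨pw3 (fun a b c => (a && b) || (a && c) || (b && c)) a b c :: bs,
          fun d hd => by
            rcases List.mem_cons.mp hd with rfl | hd'
            · exact maj_block a b c ha hb hc
            · exact hbs d hd',
          by simp [hflat]⟩

lemma L6_head (w : List Bool) (hw : w ∈ L6) (h3 : w.length = 3) : w ∈ S6 := by
  obtain ⟨bs, hbs, rfl⟩ := hw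
  rw [flatten_len bs hbs] at h3
  have : bs.length = 1 := by omega
  obtain ⟨b, rfl⟩ : ∃ b, bs = [b] := List.length_eq_one_iff.mp this
  simpa [S6] using hbs b (by simp)

lemma mem001 : [false, false, true] ∈ L6 := ⟨[[false, false, true]], by simp [Set.mem_insert_iff], rfl⟩
lemma mem010 : [false, true, false] ∈ L6 := ⟨[[false, true, false]], by simp [Set.mem_insert_iff], rfl⟩
lemma mem110 : [true, true, false] ∈ L6 := ⟨[[true, true, false]], by simp [Set.mem_insert_iff], rfl⟩

/-- `(001+010+110)*` is closed under coordinatewise majority, but not under minority,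
`∧`, or `∨`. -/
theorem stmt6 :
    (∀ x ∈ L6, ∀ y ∈ L6, ∀ z ∈ L6, x.length = y.length → y.length = z.length →
      pw3 (fun a b c => (a && b) || (a && c) || (b && c)) x y z ∈ L6) ∧
    ¬ (∀ x ∈ L6, ∀ y ∈ L6, ∀ z ∈ L6, x.length = y.length → y.length = z.length →
      pw3 (fun a b c => xor (xor a b) c) x y z ∈ L6) ∧
    ¬ (∀ x ∈ L6, ∀ y ∈ L6, x.length = y.length → pw2 (· && ·) x y ∈ L6) ∧
    ¬ (∀ x ∈ L6, ∀ y ∈ L6, x.length = y.length → pw2 (· || ·) x y ∈ L6) := by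
  refine ⟨?_, ?_, ?_, ?_⟩
  · rintro x ⟨bx, hbx, rfl⟩ y ⟨by', hby, rfl⟩ z ⟨bz, hbz, rfl⟩ h1 h2
    rw [flatten_len bx hbx, flatten_len by' hby] at h1
    rw [flatten_len by' hby, flatten_len bz hbz] at h2
    exact maj_closed bx by' bz hbx hby hbz (by omega) (by omega)
  · intro h
    have := h _ mem001 _ mem010 _ mem110 rfl rfl
    have := L6_head _ this (by decide)
    simp [pw3, pw2, S6, Set.mem_insert_iff] at this
  · intro h
    have := h _ mem001 _ mem010 rfl
    have := L6_head _ this (by decide)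
    simp [pw3, pw2, S6, Set.mem_insert_iff] at this
  · intro h
    have := h _ mem001 _ mem010 rfl
    have := L6_head _ this (by decide)
    simp [pw3, pw2, S6, Set.mem_insert_iff] at this
end

section
/- Let D be finite and let P : V × V → Set (D × D) assign to every ordered pair of variables a binary relation preserved by a majority operation g, in a path-consistent way: for all x, y, z ∈ V and all (a,b) ∈ P(x,y) there exists c ∈ D with (a,c) ∈ P(x,z) and (b,c) ∈ P(y,z), and all P(x,y) are nonempty (and symmetric-compatible: (a,b) ∈ P(x,y) iff (b,a) ∈ P(y,x), with P(x,x) ⊆ diagonal). Then there exists a global assignment ψ : V → D such that (ψ(x), ψ(y)) ∈ P(x,y) for all x, y ∈ V. -/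
/-- Path consistency implies global satisfiability for binary relations preserved by
a majority operation: if every `P x y ⊆ D × D` is nonempty, closed under the majority
operation `g`, symmetric-compatible, diagonal on `P x x`, and path-consistent, then
there is a global assignment `ψ` with `(ψ x, ψ y) ∈ P x y` for all `x, y`. -/
theorem stmt11 {V D : Type} [Fintype V] [Fintype D]
    (g : D → D → D → D)
    (hmaj : ∀ x y : D, g x y y = y ∧ g y x y = y ∧ g y y x = y)
    (P : V → V → Set (D × D))
    (hclosed : ∀ x y, ∀ p ∈ P x y, ∀ q ∈ P x y, ∀ s ∈ P x y,
      (g p.1 q.1 s.1, g p.2 q.2 s.2) ∈ P x y)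
    (hne : ∀ x y, (P x y).Nonempty)
    (hsym : ∀ x y a b, (a, b) ∈ P x y ↔ (b, a) ∈ P y x)
    (hdiag : ∀ x a b, (a, b) ∈ P x x → a = b)
    (hpath : ∀ x y z a b, (a, b) ∈ P x y →
      ∃ c, (a, c) ∈ P x z ∧ (b, c) ∈ P y z) :
    ∃ ψ : V → D, ∀ x y, (ψ x, ψ y) ∈ P x y := by
  classical
  -- From a single pair get the diagonal facts
  have hdiag2 : ∀ x z a c, (a, c) ∈ P x z → (c, c) ∈ P z z := by
    intro x z a c h
    obtain ⟨c', h1, h2⟩ := hpath x z z a c h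
    have : c = c' := hdiag z c c' h2
    exact this ▸ h2
  -- given (b, c1) ∈ P y z, find u with (u, c1) ∈ P x z
  have getu : ∀ x y z b c1, (b, c1) ∈ P y z → ∃ u, (u, c1) ∈ P x z := by
    intro x y z b c1 h
    obtain ⟨u, _, h2⟩ := hpath y z x b c1 h
    exact ⟨u, (hsym z x c1 u).mp h2⟩
  -- extension lemma
  have ext : ∀ n (S : Finset V), S.card = n → ∀ ψ : V → D,
      (∀ x ∈ S, ∀ y ∈ S, (ψ x, ψ y) ∈ P x y) → ∀ z : V,
      ∃ c, (c, c) ∈ P z z ∧ ∀ x ∈ S, (ψ x, c) ∈ P x z := by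
    intro n
    induction n using Nat.strong_induction_on with
    | _ n IH =>
      intro S hcard ψ hψ z
      rcases S.eq_empty_or_nonempty with rfl | ⟨x1, hx1⟩
      · obtain ⟨⟨a, b⟩, hab⟩ := hne z z
        have : a = b := hdiag z a b hab
        exact ⟨a, this ▸ hab, by simp⟩
      rcases (S.erase x1).eq_empty_or_nonempty with hS1 | ⟨x2, hx2⟩
      · -- S = {x1}
        have hSx : ∀ x ∈ S, x = x1 := by
          intro x hx
          by_contra hne'
          exact (Finset.eq_empty_iff_forall_notMem.mp hS1 x)
            (Finset.mem_erase.mpr ⟨hne', hx⟩)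
        obtain ⟨c, hc1, _⟩ := hpath x1 x1 z (ψ x1) (ψ x1) (hψ x1 hx1 x1 hx1)
        refine ⟨c, hdiag2 x1 z (ψ x1) c hc1, ?_⟩
        intro x hx; rw [hSx x hx]; exact hc1
      rcases ((S.erase x1).erase x2).eq_empty_or_nonempty with hS2 | ⟨x3, hx3⟩
      · -- S = {x1, x2}
        have hx2S : x2 ∈ S := (Finset.mem_erase.mp hx2).2
        have hSx : ∀ x ∈ S, x = x1 ∨ x = x2 := by
          intro x hx
          by_contra hne'
          push_neg at hne'
          exact (Finset.eq_empty_iff_forall_notMem.mp hS2 x)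
            (Finset.mem_erase.mpr ⟨hne'.2, Finset.mem_erase.mpr ⟨hne'.1, hx⟩⟩)
        obtain ⟨c, hc1, hc2⟩ := hpath x1 x2 z (ψ x1) (ψ x2) (hψ x1 hx1 x2 hx2S)
        refine ⟨c, hdiag2 x1 z (ψ x1) c hc1, ?_⟩
        intro x hx
        rcases hSx x hx with rfl | rfl
        · exact hc1
        · exact hc2
      · -- S has at least 3 elements
        have hx2S : x2 ∈ S := (Finset.mem_erase.mp hx2).2
        have hx3e : x3 ∈ S.erase x1 := (Finset.mem_erase.mp hx3).2
        have hx3S : x3 ∈ S := (Finset.mem_erase.mp hx3e).2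
        have h21 : x2 ≠ x1 := (Finset.mem_erase.mp hx2).1
        have h32 : x3 ≠ x2 := (Finset.mem_erase.mp hx3).1
        have h31 : x3 ≠ x1 := (Finset.mem_erase.mp hx3e).1
        have hcard1 : ∀ x ∈ S, (S.erase x).card < n := by
          intro x hx
          rw [← hcard]
          exact Finset.card_erase_lt_of_mem hx
        have hψe : ∀ w, ∀ x ∈ S.erase w, ∀ y ∈ S.erase w, (ψ x, ψ y) ∈ P x y := by
          intro w x hx y hy
          exact hψ x (Finset.mem_of_mem_erase hx) y (Finset.mem_of_mem_erase hy)
        obtain ⟨c1, _, hc1⟩ := IH _ (hcard1 x1 hx1) (S.erase x1) rfl ψ (hψe x1) z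
        obtain ⟨c2, _, hc2⟩ := IH _ (hcard1 x2 hx2S) (S.erase x2) rfl ψ (hψe x2) z
        obtain ⟨c3, _, hc3⟩ := IH _ (hcard1 x3 hx3S) (S.erase x3) rfl ψ (hψe x3) z
        -- c1 works for all x ≠ x1, etc.
        obtain ⟨u1, hu1⟩ := getu x1 x2 z (ψ x2) c1 (hc1 x2 hx2)
        obtain ⟨u2, hu2⟩ := getu x2 x1 z (ψ x1) c2
          (hc2 x1 (Finset.mem_erase.mpr ⟨h21.symm, hx1⟩))
        obtain ⟨u3, hu3⟩ := getu x3 x1 z (ψ x1) c3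
          (hc3 x1 (Finset.mem_erase.mpr ⟨h31.symm, hx1⟩))
        refine ⟨g c1 c2 c3, ?_, ?_⟩
        · have h := hclosed x1 z (u1, c1) hu1 (ψ x1, c2)
            (hc2 x1 (Finset.mem_erase.mpr ⟨h21.symm, hx1⟩)) (ψ x1, c3)
            (hc3 x1 (Finset.mem_erase.mpr ⟨h31.symm, hx1⟩))
          simp only [(hmaj u1 (ψ x1)).1] at h
          exact hdiag2 x1 z (ψ x1) (g c1 c2 c3) h
        intro x hx
        by_cases e1 : x = x1
        · subst e1
          have h := hclosed x z (u1, c1) hu1 (ψ x, c2)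
            (hc2 x (Finset.mem_erase.mpr ⟨h21.symm, hx⟩)) (ψ x, c3)
            (hc3 x (Finset.mem_erase.mpr ⟨h31.symm, hx⟩))
          simpa only [(hmaj u1 (ψ x)).1] using h
        by_cases e2 : x = x2
        · subst e2
          have h := hclosed x z (ψ x, c1) (hc1 x (Finset.mem_erase.mpr ⟨e1, hx⟩))
            (u2, c2) hu2 (ψ x, c3)
            (hc3 x (Finset.mem_erase.mpr ⟨h32.symm, hx⟩))
          simpa only [(hmaj u2 (ψ x)).2.1] using h
        by_cases e3 : x = x3
        · subst e3
          have h := hclosed x z (ψ x, c1) (hc1 x (Finset.mem_erase.mpr ⟨e1, hx⟩))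
            (ψ x, c2) (hc2 x (Finset.mem_erase.mpr ⟨e2, hx⟩)) (u3, c3) hu3
          simpa only [(hmaj u3 (ψ x)).2.2] using h
        · have h := hclosed x z (ψ x, c1) (hc1 x (Finset.mem_erase.mpr ⟨e1, hx⟩))
            (ψ x, c2) (hc2 x (Finset.mem_erase.mpr ⟨e2, hx⟩)) (ψ x, c3)
            (hc3 x (Finset.mem_erase.mpr ⟨e3, hx⟩))
          simpa only [(hmaj (ψ x) (ψ x)).1] using h
  -- build a global assignment over finsets
  by_cases hV : Nonempty V
  · obtain ⟨v⟩ := hV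
    have key : ∀ S : Finset V, ∃ ψ : V → D, ∀ x ∈ S, ∀ y ∈ S, (ψ x, ψ y) ∈ P x y := by
      intro S
      induction S using Finset.induction_on with
      | empty =>
        obtain ⟨⟨a, b⟩, _⟩ := hne v v
        exact ⟨fun _ => a, by simp⟩
      | @insert z S hzS ih =>
        obtain ⟨ψ, hψ⟩ := ih
        obtain ⟨c, hcc, hc⟩ := ext S.card S rfl ψ hψ z
        refine ⟨Function.update ψ z c, ?_⟩
        intro x hx y hy
        rcases Finset.mem_insert.mp hx with hxz | hxS
        · subst hxz
          rcases Finset.mem_insert.mp hy with hyz | hyS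
          · subst hyz
            simpa using hcc
          · have hyz : y ≠ x := fun h => hzS (h ▸ hyS)
            simp only [Function.update_self, Function.update_of_ne hyz]
            exact (hsym y x (ψ y) c).mp (hc y hyS)
        · have hxz : x ≠ z := fun h => hzS (h ▸ hxS)
          rcases Finset.mem_insert.mp hy with hyz | hyS
          · subst hyz
            simp only [Function.update_self, Function.update_of_ne hxz]
            exact hc x hxS
          · have hyz : y ≠ z := fun h => hzS (h ▸ hyS)
            simp only [Function.update_of_ne hxz, Function.update_of_ne hyz]
            exact hψ x hxS y hyS
    obtain ⟨ψ, hψ⟩ := key Finset.univ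
    exact ⟨ψ, fun x y => hψ x (Finset.mem_univ x) y (Finset.mem_univ y)⟩
  · rw [not_nonempty_iff] at hV
    exact ⟨fun x => isEmptyElim x, fun x => isEmptyElim x⟩
end
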